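/- Let X and A be countable nonempty sets (states and actions), let P : X × A × X → [0,1] with ∑_{x'} P(x, a, x') = 1 for all (x, a) (transition probabilities), let π : X × A → [0,1] with ∑_{a'} π(x', a') = 1 for all x' (a policy), let r : X × A → ℝ be a reward function, let γ ∈ [0,1), and let N ≥ 1. For a bounded function θ : X × A → ℝ^N, define for each (x, a) the probability measure μ_θ(x, a) = ∑_{x' ∈ X} ∑_{a' ∈ A} P(x, a, x')·π(x', a') · (1/N) ∑_{j=1}^N δ_{r(x,a) + γ·θ_j(x', a')} on ℝ, and define the projected distributional Bellman operator Φ by (Φθ)_i(x, a) = F_{μ_θ(x,a)}⁻¹((2i−1)/(2N)) for i = 1, …, N. Then for all bounded θ, ψ : X × A → ℝ^N, sup_{x, a, i} |(Φθ)_i(x, a) − (Φψ)_i(x, a)| ≤ γ · sup_{x, a, j} |θ_j(x, a) − ψ_j(x, a)|. Equivalently, the combination of the quantile-midpoint W_1-projection with the distributional Bellman operator is a γ-contraction in the maximal ∞-Wasserstein metric d̄_∞ over quantile value distributions. -/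

import Mathlib

open MeasureTheory Set
open scoped ENNReal

/-! Couple the two Bellman backups atom by atom: the `j`-th atoms of `θ` and `ψ` at `(x', a')`
carry the same weight `P(x,a,x') π(x',a') / N` and differ by at most `γ C`, where `C` bounds
`|θ - ψ|`. Hence `F_θ(y) ≤ F_ψ(y + γ C)` and symmetrically, which moves every quantile by at most
`γ C`. Bounded atoms make the backups probability measures of bounded support, so quantiles at
levels in `(0, 1]` are infima of nonempty sets bounded below. -/

/-- The CDF of a measure on ℝ: `F(y) = μ((-∞, y])`. -/
noncomputable def cdfFn (μ : Measure ℝ) (y : ℝ) : ℝ := (μ (Iic y)).toReal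

/-- The quantile function (generalized inverse CDF): `F⁻¹(ω) = inf {y | ω ≤ F(y)}`. -/
noncomputable def quantileFn (μ : Measure ℝ) (ω : ℝ) : ℝ := sInf {y : ℝ | ω ≤ cdfFn μ y}

/-- The distributional Bellman backup at `(x, a)` of the quantile value distribution with atoms
`θ`, i.e. `μ_θ(x,a) = ∑_{x',a'} P(x,a,x') π(x',a') (1/N) ∑ⱼ δ_{r(x,a) + γ θ_j(x',a')}`. -/
noncomputable def bellmanBackup {X A : Type*} [Countable X] [Countable A]
    (P : X → A → X → ℝ) (π : X → A → ℝ) (r : X → A → ℝ) (γ : ℝ) (N : ℕ)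
    (θ : X × A → Fin N → ℝ) (x : X) (a : A) : Measure ℝ :=
  Measure.sum fun x' : X => Measure.sum fun a' : A =>
    ENNReal.ofReal (P x a x' * π x' a') •
      ((N : ℝ≥0∞)⁻¹ • ∑ j : Fin N, Measure.dirac (r x a + γ * θ (x', a') j))

/-- The projected distributional Bellman operator: `(Φθ)ᵢ(x,a)` is the quantile midpoint
`F⁻¹((2i-1)/(2N))` of the Bellman backup `μ_θ(x,a)` (with `i : Fin N` 0-indexed). -/
noncomputable def projBellman {X A : Type*} [Countable X] [Countable A]
    (P : X → A → X → ℝ) (π : X → A → ℝ) (r : X → A → ℝ) (γ : ℝ) (N : ℕ)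
    (θ : X × A → Fin N → ℝ) : X × A → Fin N → ℝ :=
  fun q i => quantileFn (bellmanBackup P π r γ N θ q.1 q.2) ((2 * (i : ℝ) + 1) / (2 * N))

lemma ENNReal.tsum_ofReal_eq_one {ι : Type*} {f : ι → ℝ} (hf₀ : ∀ i, 0 ≤ f i)
    (hf : ∑' i, f i = 1) : ∑' i, ENNReal.ofReal (f i) = 1 := by
  have hsum : Summable f := by
    by_contra h
    simp [tsum_eq_zero_of_not_summable h] at hf
  rw [← ENNReal.ofReal_tsum_of_nonneg hf₀ hsum, hf, ENNReal.ofReal_one]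

lemma ENNReal.tsum_tsum_ofReal_mul_eq_one {X A : Type*} {p : X → ℝ} {π : X → A → ℝ}
    (hp₀ : ∀ x, 0 ≤ p x) (hp : ∑' x, p x = 1) (hπ₀ : ∀ x a, 0 ≤ π x a)
    (hπ : ∀ x, ∑' a, π x a = 1) : ∑' x, ∑' a, ENNReal.ofReal (p x * π x a) = 1 := by
  simp_rw [ENNReal.ofReal_mul (hp₀ _), ENNReal.tsum_mul_left,
    ENNReal.tsum_ofReal_eq_one (hπ₀ _) (hπ _), mul_one]
  exact ENNReal.tsum_ofReal_eq_one hp₀ hp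

section Quantile

variable {μ ν : Measure ℝ} {ω ε : ℝ}

lemma quantileFn_le_add_of_cdfFn_le (h : ∀ y, cdfFn μ y ≤ cdfFn ν (y + ε))
    (hμ : {y | ω ≤ cdfFn μ y}.Nonempty) (hν : BddBelow {y | ω ≤ cdfFn ν y}) :
    quantileFn ν ω ≤ quantileFn μ ω + ε := by
  rw [← sub_le_iff_le_add, quantileFn]
  refine le_csInf hμ fun y hy => ?_
  rw [sub_le_iff_le_add]
  exact csInf_le hν (hy.trans (h y))

lemma abs_quantileFn_sub_le (hμν : ∀ y, cdfFn μ y ≤ cdfFn ν (y + ε))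
    (hνμ : ∀ y, cdfFn ν y ≤ cdfFn μ (y + ε))
    (hμ : {y | ω ≤ cdfFn μ y}.Nonempty) (hν : {y | ω ≤ cdfFn ν y}.Nonempty)
    (hμ' : BddBelow {y | ω ≤ cdfFn μ y}) (hν' : BddBelow {y | ω ≤ cdfFn ν y}) :
    |quantileFn μ ω - quantileFn ν ω| ≤ ε := by
  have := quantileFn_le_add_of_cdfFn_le hμν hμ hν'
  have := quantileFn_le_add_of_cdfFn_le hνμ hν hμ'
  exact abs_sub_le_iff.2 ⟨by linarith, by linarith⟩

lemma nonempty_setOf_le_cdfFn [IsProbabilityMeasure μ] {b : ℝ} (hb : μ (Ioi b) = 0)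
    (hω : ω ≤ 1) : {y | ω ≤ cdfFn μ y}.Nonempty := by
  refine ⟨b, ?_⟩
  rw [← compl_Iic, prob_compl_eq_zero_iff measurableSet_Iic] at hb
  simpa [cdfFn, hb] using hω

lemma bddBelow_setOf_le_cdfFn {b : ℝ} (hb : μ (Iio b) = 0) (hω : 0 < ω) :
    BddBelow {y | ω ≤ cdfFn μ y} := by
  refine ⟨b, fun y hy => not_lt.1 fun hyb => ?_⟩
  have : μ (Iic y) = 0 := measure_mono_null (Iic_subset_Iio.2 hyb) hb
  simp only [mem_ofPred_eq, cdfFn, this, ENNReal.toReal_zero] at hy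
  linarith

end Quantile

section BellmanBackup

variable {X A : Type*} [Countable X] [Countable A] {P : X → A → X → ℝ} {π : X → A → ℝ}
  {r : X → A → ℝ} {γ : ℝ} {N : ℕ}

lemma bellmanBackup_apply (θ : X × A → Fin N → ℝ) (x : X) (a : A) {s : Set ℝ}
    (hs : MeasurableSet s) :
    bellmanBackup P π r γ N θ x a s
      = ∑' x' : X, ∑' a' : A, ENNReal.ofReal (P x a x' * π x' a') *
          ((N : ℝ≥0∞)⁻¹ * ∑ j : Fin N, s.indicator 1 (r x a + γ * θ (x', a') j)) := by
  simp only [bellmanBackup, Measure.sum_apply _ hs, Measure.smul_apply,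
    Measure.finsetSum_apply, smul_eq_mul, Measure.dirac_apply' _ hs]

lemma isProbabilityMeasure_bellmanBackup (hP₀ : ∀ x a x', 0 ≤ P x a x')
    (hP : ∀ x a, ∑' x', P x a x' = 1) (hπ₀ : ∀ x' a', 0 ≤ π x' a')
    (hπ : ∀ x', ∑' a', π x' a' = 1) [NeZero N] (θ : X × A → Fin N → ℝ) (x : X) (a : A) :
    IsProbabilityMeasure (bellmanBackup P π r γ N θ x a) := by
  constructor
  simp only [bellmanBackup_apply θ x a MeasurableSet.univ, indicator_univ, Pi.one_apply,
    Finset.sum_const, Finset.card_univ, Fintype.card_fin, nsmul_eq_mul, mul_one,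
    ENNReal.inv_mul_cancel (NeZero.ne (N : ℝ≥0∞)) (ENNReal.natCast_ne_top N)]
  exact ENNReal.tsum_tsum_ofReal_mul_eq_one (hP₀ x a) (hP x a) hπ₀ hπ

lemma bellmanBackup_le_of_forall_mem_imp (θ ψ : X × A → Fin N → ℝ) (x : X) (a : A)
    {s t : Set ℝ} (hs : MeasurableSet s) (ht : MeasurableSet t)
    (h : ∀ x' a' j, r x a + γ * θ (x', a') j ∈ s → r x a + γ * ψ (x', a') j ∈ t) :
    bellmanBackup P π r γ N θ x a s ≤ bellmanBackup P π r γ N ψ x a t := by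
  rw [bellmanBackup_apply θ x a hs, bellmanBackup_apply ψ x a ht]
  gcongr with x' a' j
  by_cases hmem : r x a + γ * θ (x', a') j ∈ s
  · simp [hmem, h x' a' j hmem]
  · simp [hmem]

lemma bellmanBackup_eq_zero_of_forall_notMem (θ : X × A → Fin N → ℝ) (x : X) (a : A)
    {s : Set ℝ} (hs : MeasurableSet s) (h : ∀ x' a' j, r x a + γ * θ (x', a') j ∉ s) :
    bellmanBackup P π r γ N θ x a s = 0 :=
  le_zero_iff.1 <|
    (bellmanBackup_le_of_forall_mem_imp θ θ x a hs .empty h).trans_eq measure_empty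

lemma bellmanBackup_Ioi_eq_zero (hγ : 0 ≤ γ) {θ : X × A → Fin N → ℝ} {M : ℝ}
    (hM : ∀ q j, |θ q j| ≤ M) (x : X) (a : A) :
    bellmanBackup P π r γ N θ x a (Ioi (r x a + γ * M)) = 0 :=
  bellmanBackup_eq_zero_of_forall_notMem θ x a measurableSet_Ioi fun x' a' j => by
    simpa using mul_le_mul_of_nonneg_left (abs_le.1 (hM (x', a') j)).2 hγ

lemma bellmanBackup_Iio_eq_zero (hγ : 0 ≤ γ) {θ : X × A → Fin N → ℝ} {M : ℝ}
    (hM : ∀ q j, |θ q j| ≤ M) (x : X) (a : A) :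
    bellmanBackup P π r γ N θ x a (Iio (r x a - γ * M)) = 0 :=
  bellmanBackup_eq_zero_of_forall_notMem θ x a measurableSet_Iio fun x' a' j => by
    have := mul_le_mul_of_nonneg_left (neg_le_of_abs_le (hM (x', a') j)) hγ
    simp only [mem_Iio, not_lt]
    linarith

lemma cdfFn_bellmanBackup_le (hγ : 0 ≤ γ) {θ ψ : X × A → Fin N → ℝ} {C : ℝ}
    (hC : ∀ q j, |θ q j - ψ q j| ≤ C) (x : X) (a : A)
    [IsFiniteMeasure (bellmanBackup P π r γ N ψ x a)] (y : ℝ) :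
    cdfFn (bellmanBackup P π r γ N θ x a) y
      ≤ cdfFn (bellmanBackup P π r γ N ψ x a) (y + γ * C) := by
  refine ENNReal.toReal_mono (measure_ne_top _ _) <| bellmanBackup_le_of_forall_mem_imp θ ψ x a
    measurableSet_Iic measurableSet_Iic fun x' a' j hj => ?_
  have hψθ : ψ (x', a') j ≤ θ (x', a') j + C := by
    linarith [(abs_sub_le_iff.1 (hC (x', a') j)).2]
  have := mul_le_mul_of_nonneg_left hψθ hγ
  simp only [mem_Iic] at hj ⊢
  linarith

end BellmanBackup

lemma quantile_midpoint_mem_Ioc {N : ℕ} (i : Fin N) : (2 * (i : ℝ) + 1) / (2 * N) ∈ Ioc 0 1 := by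
  have hi : (i : ℝ) + 1 ≤ N := by exact_mod_cast i.isLt
  have hN : (0 : ℝ) < 2 * N := by linarith [(i : ℕ).cast_nonneg (α := ℝ)]
  exact ⟨by positivity, (div_le_one hN).2 (by linarith)⟩

lemma abs_projBellman_sub_le {X A : Type*} [Countable X] [Countable A] {P : X → A → X → ℝ}
    {π : X → A → ℝ} (hP₀ : ∀ x a x', 0 ≤ P x a x') (hP : ∀ x a, ∑' x', P x a x' = 1)
    (hπ₀ : ∀ x' a', 0 ≤ π x' a') (hπ : ∀ x', ∑' a', π x' a' = 1) (r : X → A → ℝ) {γ : ℝ}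
    (hγ : 0 ≤ γ) {N : ℕ} {θ ψ : X × A → Fin N → ℝ} {Mθ Mψ : ℝ} (hθ : ∀ q j, |θ q j| ≤ Mθ)
    (hψ : ∀ q j, |ψ q j| ≤ Mψ) {C : ℝ} (hC : ∀ q j, |θ q j - ψ q j| ≤ C) (q : X × A)
    (i : Fin N) :
    |projBellman P π r γ N θ q i - projBellman P π r γ N ψ q i| ≤ γ * C := by
  obtain ⟨x, a⟩ := q
  have : NeZero N := NeZero.of_pos i.pos
  have := isProbabilityMeasure_bellmanBackup (r := r) (γ := γ) hP₀ hP hπ₀ hπ θ x a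
  have := isProbabilityMeasure_bellmanBackup (r := r) (γ := γ) hP₀ hP hπ₀ hπ ψ x a
  obtain ⟨hω₀, hω₁⟩ := quantile_midpoint_mem_Ioc i
  exact abs_quantileFn_sub_le (cdfFn_bellmanBackup_le hγ hC x a)
    (cdfFn_bellmanBackup_le hγ (fun q j => (abs_sub_comm _ _).trans_le (hC q j)) x a)
    (nonempty_setOf_le_cdfFn (bellmanBackup_Ioi_eq_zero hγ hθ x a) hω₁)
    (nonempty_setOf_le_cdfFn (bellmanBackup_Ioi_eq_zero hγ hψ x a) hω₁)
    (bddBelow_setOf_le_cdfFn (bellmanBackup_Iio_eq_zero hγ hθ x a) hω₀)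
    (bddBelow_setOf_le_cdfFn (bellmanBackup_Iio_eq_zero hγ hψ x a) hω₀)

theorem projected_bellman_contraction_general
    {X A : Type*} [Countable X] [Countable A]
    (P : X → A → X → ℝ) (hP01 : ∀ x a x', P x a x' ∈ Set.Icc (0:ℝ) 1)
    (hP : ∀ x a, ∑' x', P x a x' = 1)
    (π : X → A → ℝ) (hπ01 : ∀ x' a', π x' a' ∈ Set.Icc (0:ℝ) 1)
    (hπ : ∀ x', ∑' a', π x' a' = 1)
    (r : X → A → ℝ) (γ : ℝ) (hγ : γ ∈ Set.Ico (0:ℝ) 1) (N : ℕ)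
    (θ ψ : X × A → Fin N → ℝ)
    (hθ : ∃ M : ℝ, ∀ q j, |θ q j| ≤ M) (hψ : ∃ M : ℝ, ∀ q j, |ψ q j| ≤ M) :
    (⨆ q : (X × A) × Fin N,
        |projBellman P π r γ N θ q.1 q.2 - projBellman P π r γ N ψ q.1 q.2|)
      ≤ γ * ⨆ q : (X × A) × Fin N, |θ q.1 q.2 - ψ q.1 q.2| := by
  obtain ⟨Mθ, hMθ⟩ := hθ
  obtain ⟨Mψ, hMψ⟩ := hψ
  have hbdd : BddAbove (range fun q : (X × A) × Fin N => |θ q.1 q.2 - ψ q.1 q.2|) :=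
    ⟨Mθ + Mψ, forall_mem_range.2 fun q =>
      (abs_sub _ _).trans (add_le_add (hMθ q.1 q.2) (hMψ q.1 q.2))⟩
  have hC : ∀ q j, |θ q j - ψ q j| ≤ ⨆ q : (X × A) × Fin N, |θ q.1 q.2 - ψ q.1 q.2| :=
    fun q j => le_ciSup hbdd (q, j)
  exact Real.iSup_le
    (fun q => abs_projBellman_sub_le (fun x a x' => (hP01 x a x').1) hP
      (fun x' a' => (hπ01 x' a').1) hπ r hγ.1 hMθ hMψ hC q.1 q.2)
    (mul_nonneg hγ.1 (Real.iSup_nonneg fun _ => abs_nonneg _))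

/-- the projected distributional Bellman operator is a `γ`-contraction in the
sup-norm over atoms, i.e. in the maximal ∞-Wasserstein metric over quantile value
distributions. -/
theorem projected_bellman_contraction
    {X A : Type*} [Countable X] [Countable A] [Nonempty X] [Nonempty A]
    (P : X → A → X → ℝ) (hP01 : ∀ x a x', P x a x' ∈ Set.Icc (0:ℝ) 1)
    (hP : ∀ x a, ∑' x', P x a x' = 1)
    (π : X → A → ℝ) (hπ01 : ∀ x' a', π x' a' ∈ Set.Icc (0:ℝ) 1)
    (hπ : ∀ x', ∑' a', π x' a' = 1)
    (r : X → A → ℝ) (γ : ℝ) (hγ : γ ∈ Set.Ico (0:ℝ) 1) (N : ℕ) (hN : 1 ≤ N)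
    (θ ψ : X × A → Fin N → ℝ)
    (hθ : ∃ M : ℝ, ∀ q j, |θ q j| ≤ M) (hψ : ∃ M : ℝ, ∀ q j, |ψ q j| ≤ M) :
    (⨆ q : (X × A) × Fin N,
        |projBellman P π r γ N θ q.1 q.2 - projBellman P π r γ N ψ q.1 q.2|)
      ≤ γ * ⨆ q : (X × A) × Fin N, |θ q.1 q.2 - ψ q.1 q.2| :=
  projected_bellman_contraction_general P hP01 hP π hπ01 hπ r γ hγ N θ ψ hθ hψ
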